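/- arXiv:2204.01242 — 7 statements merged into one kernel-verified Lean document; each statement's English description precedes it below -/
import Mathlib

section
/- With q = r∧s, λₙ = ξₙs − ηₙr, a₅₅ = ξ₅η₅, a₆₆ = ξ₆η₆, a₅₆ = ξ₅η₆ + ξ₆η₅ as above (ξₙ, ηₙ odd, r,s even vectors in a 4-dimensional even space), the following super Plücker relations hold: q∧q = 0, q∧λₙ = 0, λ₅∧λ₅ = −2a₅₅ q, λ₆∧λ₆ = −2a₆₆ q, λ₅∧λ₆ = −a₅₆ q, λₙ a_{nn} = 0, λ₅ a₆₆ = −λ₆ a₅₆, λ₆ a₅₅ = −λ₅ a₅₆, a_{nn}² = 0, a₅₆² = −2 a₅₅ a₆₆, a₅₅ a₅₆ = 0, a₆₆ a₅₆ = 0. -/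
/-- super Plücker relations, interpreted coordinatewise.
Λ is a superalgebra over the commutative ring Λ₀ of even scalars,
r, s ∈ Λ₀⁴ are even vectors, ξ₅, ξ₆, η₅, η₆ ∈ Λ₁ are odd elements
(pairwise anticommuting, with zero squares).  With
q_{ij} = rᵢsⱼ − rⱼsᵢ, λ_{in} = ξₙsᵢ − ηₙrᵢ, a₅₅ = ξ₅η₅, a₆₆ = ξ₆η₆,
a₅₆ = ξ₅η₆ + ξ₆η₅, the coordinatewise super Plücker relations hold:
q∧q = 0, q∧λₙ = 0, λₙ∧λₙ = −2aₙₙq (i.e. λ_{in}λ_{jn} = q_{ij}aₙₙ),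
λ₅∧λ₆ = −a₅₆q (i.e. λ_{i5}λ_{j6}+λ_{i6}λ_{j5} = q_{ij}a₅₆),
λₙaₙₙ = 0, λ₅a₆₆ = −λ₆a₅₆, λ₆a₅₅ = −λ₅a₅₆, aₙₙ² = 0,
a₅₆² = −2a₅₅a₆₆, a₅₅a₅₆ = 0, a₆₆a₅₆ = 0. -/
theorem stmt_1 (Λ₀ : Type*) [CommRing Λ₀] (Λ : Type*) [Ring Λ] [Algebra Λ₀ Λ]
    (r s : Fin 4 → Λ₀) (ξ5 ξ6 η5 η6 : Λ)
    (hanti : ∀ x y, (x = ξ5 ∨ x = ξ6 ∨ x = η5 ∨ x = η6) →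
      (y = ξ5 ∨ y = ξ6 ∨ y = η5 ∨ y = η6) → x * y = - (y * x))
    (hsq : ∀ x, (x = ξ5 ∨ x = ξ6 ∨ x = η5 ∨ x = η6) → x * x = 0)
    (q : Fin 4 → Fin 4 → Λ₀) (hq : ∀ i j, q i j = r i * s j - r j * s i)
    (l5 l6 : Fin 4 → Λ)
    (hl5 : ∀ i, l5 i = s i • ξ5 - r i • η5)
    (hl6 : ∀ i, l6 i = s i • ξ6 - r i • η6)
    (a55 a66 a56 : Λ) (h55 : a55 = ξ5 * η5) (h66 : a66 = ξ6 * η6)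
    (h56 : a56 = ξ5 * η6 + ξ6 * η5) :
    -- q∧q = 0
    (q 0 1 * q 2 3 - q 0 2 * q 1 3 + q 0 3 * q 1 2 = 0)
    -- q∧λ₅ = 0 and q∧λ₆ = 0
    ∧ (∀ i j k : Fin 4, i < j → j < k →
        q i j • l5 k - q i k • l5 j + q j k • l5 i = 0
        ∧ q i j • l6 k - q i k • l6 j + q j k • l6 i = 0)
    -- λ₅∧λ₅ = −2a₅₅q,  λ₆∧λ₆ = −2a₆₆q (coordinatewise)
    ∧ (∀ i j, l5 i * l5 j = q i j • a55)
    ∧ (∀ i j, l6 i * l6 j = q i j • a66)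
    -- λ₅∧λ₆ = −a₅₆q (coordinatewise)
    ∧ (∀ i j, l5 i * l6 j + l6 i * l5 j = q i j • a56)
    -- λₙ aₙₙ = 0
    ∧ (∀ i, l5 i * a55 = 0) ∧ (∀ i, l6 i * a66 = 0)
    -- λ₅a₆₆ = −λ₆a₅₆,  λ₆a₅₅ = −λ₅a₅₆
    ∧ (∀ i, l5 i * a66 = - (l6 i * a56))
    ∧ (∀ i, l6 i * a55 = - (l5 i * a56))
    -- aₙₙ² = 0
    ∧ a55 * a55 = 0 ∧ a66 * a66 = 0
    -- a₅₆² = −2a₅₅a₆₆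
    ∧ a56 * a56 = - (2 • (a55 * a66))
    -- a₅₅a₅₆ = 0, a₆₆a₅₆ = 0
    ∧ a55 * a56 = 0 ∧ a66 * a56 = 0 := by
  have swap : ∀ x y, (x = ξ5 ∨ x = ξ6 ∨ x = η5 ∨ x = η6) →
      (y = ξ5 ∨ y = ξ6 ∨ y = η5 ∨ y = η6) → ∀ t, y * (x * t) = -(x * (y * t)) := by
    intro x y hx hy t
    rw [← mul_assoc, hanti y x hy hx, neg_mul, mul_assoc]
  have sq' : ∀ x, (x = ξ5 ∨ x = ξ6 ∨ x = η5 ∨ x = η6) → ∀ t, x * (x * t) = 0 := by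
    intro x hx t
    rw [← mul_assoc, hsq x hx, zero_mul]
  have m5 : ξ5 = ξ5 ∨ ξ5 = ξ6 ∨ ξ5 = η5 ∨ ξ5 = η6 := Or.inl rfl
  have m6 : ξ6 = ξ5 ∨ ξ6 = ξ6 ∨ ξ6 = η5 ∨ ξ6 = η6 := Or.inr (Or.inl rfl)
  have n5 : η5 = ξ5 ∨ η5 = ξ6 ∨ η5 = η5 ∨ η5 = η6 := Or.inr (Or.inr (Or.inl rfl))
  have n6 : η6 = ξ5 ∨ η6 = ξ6 ∨ η6 = η5 ∨ η6 = η6 := Or.inr (Or.inr (Or.inr rfl))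
  -- binary swaps (order ξ5 < ξ6 < η5 < η6)
  have s65 := hanti ξ6 ξ5 m6 m5
  have sn55 := hanti η5 ξ5 n5 m5
  have sn56 := hanti η5 ξ6 n5 m6
  have sn65 := hanti η6 ξ5 n6 m5
  have sn66 := hanti η6 ξ6 n6 m6
  have snn := hanti η6 η5 n6 n5
  -- with trailing factor
  have t65 := swap ξ5 ξ6 m5 m6
  have tn55 := swap ξ5 η5 m5 n5
  have tn56 := swap ξ6 η5 m6 n5
  have tn65 := swap ξ5 η6 m5 n6
  have tn66 := swap ξ6 η6 m6 n6
  have tnn := swap η5 η6 n5 n6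
  -- squares
  have z5 := hsq ξ5 m5
  have z6 := hsq ξ6 m6
  have zn5 := hsq η5 n5
  have zn6 := hsq η6 n6
  have z5' := sq' ξ5 m5
  have z6' := sq' ξ6 m6
  have zn5' := sq' η5 n5
  have zn6' := sq' η6 n6
  refine ⟨?_, ?_, ?_, ?_, ?_, ?_, ?_, ?_, ?_, ?_, ?_, ?_, ?_, ?_⟩
  · simp only [hq]; ring
  · intro i j k _ _
    constructor <;> simp only [hq, hl5, hl6] <;> module
  all_goals
    try intro i
    try intro j
  all_goals
    simp only [hq, hl5, hl6, h55, h66, h56, sub_mul, mul_sub, add_mul, mul_add,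
      smul_mul_assoc, mul_smul_comm, mul_assoc,
      s65, sn55, sn56, sn65, sn66, snn, t65, tn55, tn56, tn65, tn66, tnn,
      z5, z6, zn5, zn6, z5', z6', zn5', zn6',
      neg_mul, mul_neg, neg_neg, mul_zero, zero_mul, smul_neg, smul_zero, neg_zero]
  all_goals module
end

section
/- In the quantum matrix superalgebra M_q(4|2), define D_{rs} := a_{r1}a_{s2} − q⁻¹a_{r2}a_{s1} for 1 ≤ r < s ≤ 4 (even quantum minors of the first two columns). Then for 1 ≤ i < j < k < l ≤ 4, D_{ij}D_{kl} = q⁻² D_{kl}D_{ij}. -/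
private lemma swap_ext {R A : Type*} [CommRing R] [Ring A] [Algebra R A]
    {x y : A} {r : R} (h : x * y = r • (y * x)) (t : A) :
    x * (y * t) = r • (y * (x * t)) := by
  rw [← mul_assoc, h, smul_mul_assoc, mul_assoc]

private lemma comm_ext {A : Type*} [Ring A] {x y : A} (h : x * y = y * x) (t : A) :
    x * (y * t) = y * (x * t) := by rw [← mul_assoc, h, mul_assoc]

private lemma diag_ext {R A : Type*} [CommRing R] [Ring A] [Algebra R A]
    {x y u v : A} {r : R} (h : x * y = r • (u * v) + y * x) (t : A) :
    x * (y * t) = r • (u * (v * t)) + y * (x * t) := by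
  rw [← mul_assoc, h, add_mul, smul_mul_assoc, mul_assoc, mul_assoc]

/-- in M_q(4|2), for 1 ≤ i < j < k < l ≤ 4,
D_{ij}D_{kl} = q⁻²D_{kl}D_{ij}. -/
theorem stmt_5
    (R : Type*) [CommRing R] (q qi : R) (hq : q * qi = 1)
    (A : Type*) [Ring A] [Algebra R A] (a : Fin 6 → Fin 6 → A)
    (p : Fin 6 → ℕ) (hp : ∀ i, p i = if i.val < 4 then 0 else 1)
    -- Manin relations for M_q(4|2)
    (hrow : ∀ i j l : Fin 6, j < l →
      a i j * a i l = ((-1 : ℤ) ^ ((p i + p j) * (p i + p l))) •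
        ((if p i = 0 then qi else q) • (a i l * a i j)))
    (hcol : ∀ i k j : Fin 6, i < k →
      a i j * a k j = ((-1 : ℤ) ^ ((p i + p j) * (p k + p j))) •
        ((if p j = 0 then qi else q) • (a k j * a i j)))
    (hmix : ∀ i k j l : Fin 6, i < k → l < j →
      a i j * a k l = ((-1 : ℤ) ^ ((p i + p j) * (p k + p l))) • (a k l * a i j))
    (hdiag : ∀ i k j l : Fin 6, i < k → j < l →
      a i j * a k l - ((-1 : ℤ) ^ ((p i + p j) * (p k + p l))) • (a k l * a i j)
        = ((-1 : ℤ) ^ ((p i + p j) * (p k + p l))) • ((qi - q) • (a k j * a i l)))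
    (hsq : ∀ i j : Fin 6, (p i + p j) % 2 = 1 → a i j * a i j = 0)
    -- the quantum minors built from the first two columns
    (D : Fin 6 → Fin 6 → A)
    (hD : ∀ r s : Fin 6, D r s = a r 0 * a s 1 - qi • (a r 1 * a s 0)) :
    ∀ i j k l : Fin 6, i < j → j < k → k < l → l.val < 4 →
      D i j * D k l = (qi * qi) • (D k l * D i j) := by
  intro i j k l hij hjk hkl hl4
  have hk4 : k.val < 4 := lt_trans hkl hl4
  have hj4 : j.val < 4 := lt_trans hjk hk4
  have hi4 : i.val < 4 := lt_trans hij hj4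
  have hp0 : ∀ m : Fin 6, m.val < 4 → p m = 0 := by
    intro m hm; rw [hp]; simp [hm]
  have e0 : p (0 : Fin 6) = 0 := hp0 0 (by decide)
  have e1 : p (1 : Fin 6) = 0 := hp0 1 (by decide)
  -- specialized relations
  have Hcol0 : ∀ r s : Fin 6, r < s → r.val < 4 → s.val < 4 →
      a r 0 * a s 0 = qi • (a s 0 * a r 0) := by
    intro r s hrs hr hs
    have h := hcol r s 0 hrs
    rw [hp0 r hr, hp0 s hs, e0] at h
    simpa using h
  have Hcol1 : ∀ r s : Fin 6, r < s → r.val < 4 → s.val < 4 →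
      a r 1 * a s 1 = qi • (a s 1 * a r 1) := by
    intro r s hrs hr hs
    have h := hcol r s 1 hrs
    rw [hp0 r hr, hp0 s hs, e1] at h
    simpa using h
  have Hmix : ∀ r s : Fin 6, r < s → r.val < 4 → s.val < 4 →
      a r 1 * a s 0 = a s 0 * a r 1 := by
    intro r s hrs hr hs
    have h := hmix r s 1 0 hrs (by decide)
    rw [hp0 r hr, hp0 s hs, e0, e1] at h
    simpa using h
  have Hdiag : ∀ r s : Fin 6, r < s → r.val < 4 → s.val < 4 →
      a r 0 * a s 1 = (qi - q) • (a s 0 * a r 1) + a s 1 * a r 0 := by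
    intro r s hrs hr hs
    have h := hdiag r s 0 1 hrs (by decide)
    rw [hp0 r hr, hp0 s hs, e0, e1] at h
    simp only [pow_zero, one_smul, Nat.add_zero, Nat.mul_zero, Nat.zero_mul] at h
    rw [sub_eq_iff_eq_add] at h
    simpa using h
  -- key commutation lemmas: D r s commutes with a m c up to qi, for r < s < m
  have key0 : ∀ r s m : Fin 6, r < s → s < m → m.val < 4 →
      D r s * a m 0 = qi • (a m 0 * D r s) := by
    intro r s m hrs hsm hm4
    have hs4 : s.val < 4 := lt_trans hsm hm4
    have hr4 : r.val < 4 := lt_trans hrs hs4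
    rw [hD r s]
    simp only [sub_mul, mul_sub, smul_mul_assoc, mul_smul_comm, smul_sub, smul_smul,
      mul_assoc]
    simp only [Hmix s m hsm hs4 hm4, Hcol0 s m hsm hs4 hm4, mul_smul_comm, smul_smul,
      swap_ext (Hcol0 r m (lt_trans hrs hsm) hr4 hm4),
      comm_ext (Hmix r m (lt_trans hrs hsm) hr4 hm4)]
  have key1 : ∀ r s m : Fin 6, r < s → s < m → m.val < 4 →
      D r s * a m 1 = qi • (a m 1 * D r s) := by
    intro r s m hrs hsm hm4
    have hs4 : s.val < 4 := lt_trans hsm hm4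
    have hr4 : r.val < 4 := lt_trans hrs hs4
    rw [hD r s]
    simp only [sub_mul, mul_sub, smul_mul_assoc, mul_smul_comm, smul_sub, smul_smul,
      mul_assoc]
    simp only [Hcol1 s m hsm hs4 hm4, Hdiag s m hsm hs4 hm4, mul_add, mul_smul_comm,
      smul_add, smul_smul,
      diag_ext (Hdiag r m (lt_trans hrs hsm) hr4 hm4),
      comm_ext (Hmix r m (lt_trans hrs hsm) hr4 hm4),
      swap_ext (Hcol1 r m (lt_trans hrs hsm) hr4 hm4)]
    module
  -- combine
  have hjl : j < l := lt_trans hjk hkl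
  rw [hD k l]
  simp only [mul_sub, sub_mul, smul_mul_assoc, mul_smul_comm, smul_sub, smul_smul]
  simp only [swap_ext (key0 i j k hij hjk hk4), swap_ext (key1 i j k hij hjk hk4),
    key0 i j l hij hjl hl4, key1 i j l hij hjl hl4, mul_smul_comm, smul_smul, mul_assoc]
end

section
/- In M_q(4|2), with D_{rs} := a_{r1}a_{s2} − q⁻¹a_{r2}a_{s1}, for 1 ≤ i < k < j < l ≤ 4 one has D_{ij}D_{kl} = q⁻² D_{kl}D_{ij} − (q⁻¹ − q) D_{ik}D_{jl}, and for 1 ≤ i < k < l < j ≤ 4 one has D_{ij}D_{kl} = D_{kl}D_{ij}. -/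
private lemma liftmul {A : Type*} [Ring A] {u v e : A} (h : u * v = e) (c : A) :
    u * (v * c) = e * c := by rw [← mul_assoc, h]

/-- in M_q(4|2), for 1 ≤ i < k < j < l ≤ 4,
D_{ij}D_{kl} = q⁻²D_{kl}D_{ij} − (q⁻¹−q)D_{ik}D_{jl}, and for
1 ≤ i < k < l < j ≤ 4, D_{ij}D_{kl} = D_{kl}D_{ij}. -/
theorem stmt_6
    (R : Type*) [CommRing R] (q qi : R) (hq : q * qi = 1)
    (A : Type*) [Ring A] [Algebra R A] (a : Fin 6 → Fin 6 → A)
    (p : Fin 6 → ℕ) (hp : ∀ i, p i = if i.val < 4 then 0 else 1)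
    -- Manin relations for M_q(4|2)
    (hrow : ∀ i j l : Fin 6, j < l →
      a i j * a i l = ((-1 : ℤ) ^ ((p i + p j) * (p i + p l))) •
        ((if p i = 0 then qi else q) • (a i l * a i j)))
    (hcol : ∀ i k j : Fin 6, i < k →
      a i j * a k j = ((-1 : ℤ) ^ ((p i + p j) * (p k + p j))) •
        ((if p j = 0 then qi else q) • (a k j * a i j)))
    (hmix : ∀ i k j l : Fin 6, i < k → l < j →
      a i j * a k l = ((-1 : ℤ) ^ ((p i + p j) * (p k + p l))) • (a k l * a i j))
    (hdiag : ∀ i k j l : Fin 6, i < k → j < l →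
      a i j * a k l - ((-1 : ℤ) ^ ((p i + p j) * (p k + p l))) • (a k l * a i j)
        = ((-1 : ℤ) ^ ((p i + p j) * (p k + p l))) • ((qi - q) • (a k j * a i l)))
    (hsq : ∀ i j : Fin 6, (p i + p j) % 2 = 1 → a i j * a i j = 0)
    -- the quantum minors built from the first two columns
    (D : Fin 6 → Fin 6 → A)
    (hD : ∀ r s : Fin 6, D r s = a r 0 * a s 1 - qi • (a r 1 * a s 0)) :
    (∀ i k j l : Fin 6, i < k → k < j → j < l → l.val < 4 →
      D i j * D k l = (qi * qi) • (D k l * D i j) - (qi - q) • (D i k * D j l))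
    ∧ (∀ i k l j : Fin 6, i < k → k < l → l < j → j.val < 4 →
      D i j * D k l = D k l * D i j) := by
  have hp0 : ∀ r : Fin 6, r.val < 4 → p r = 0 := fun r hr => by rw [hp]; exact if_pos hr
  have Hxx : ∀ r s : Fin 6, r < s → r.val < 4 → s.val < 4 →
      a r 0 * a s 0 = qi • (a s 0 * a r 0) := by
    intro r s hrs hr hs
    have h := hcol r s 0 hrs
    rw [hp0 r hr, hp0 s hs, hp0 0 (by norm_num)] at h
    simpa using h
  have Hyy : ∀ r s : Fin 6, r < s → r.val < 4 → s.val < 4 →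
      a r 1 * a s 1 = qi • (a s 1 * a r 1) := by
    intro r s hrs hr hs
    have h := hcol r s 1 hrs
    rw [hp0 r hr, hp0 s hs, hp0 1 (by norm_num)] at h
    simpa using h
  have Hyx : ∀ r s : Fin 6, r < s → r.val < 4 → s.val < 4 →
      a r 1 * a s 0 = a s 0 * a r 1 := by
    intro r s hrs hr hs
    have h := hmix r s 1 0 hrs (by decide)
    rw [hp0 r hr, hp0 s hs, hp0 0 (by norm_num), hp0 1 (by norm_num)] at h
    simpa using h
  have Hxy : ∀ r s : Fin 6, r < s → r.val < 4 → s.val < 4 →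
      a r 0 * a s 1 = a s 1 * a r 0 + (qi - q) • (a s 0 * a r 1) := by
    intro r s hrs hr hs
    have h := hdiag r s 0 1 hrs (by decide)
    rw [hp0 r hr, hp0 s hs, hp0 0 (by norm_num), hp0 1 (by norm_num)] at h
    simp only [Nat.add_zero, Nat.mul_zero, pow_zero, one_smul, Nat.zero_mul, Nat.zero_add] at h
    linear_combination (norm := module) h
  constructor
  · intro i k j l hik hkj hjl hl4
    have hiv : i.val < k.val := hik
    have hkv : k.val < j.val := hkj
    have hjv : j.val < l.val := hjl
    have hi4 : i.val < 4 := by omega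
    have hk4 : k.val < 4 := by omega
    have hj4 : j.val < 4 := by omega
    have hij : i < j := lt_trans hik hkj
    have hil : i < l := lt_trans hij hjl
    have hkl : k < l := lt_trans hkj hjl
    have xx12 := Hxx i k hik hi4 hk4
    have xy12 := Hxy i k hik hi4 hk4
    have yx12 := Hyx i k hik hi4 hk4
    have yy12 := Hyy i k hik hi4 hk4
    have xx13 := Hxx i j hij hi4 hj4
    have xy13 := Hxy i j hij hi4 hj4
    have yx13 := Hyx i j hij hi4 hj4
    have yy13 := Hyy i j hij hi4 hj4
    have xx14 := Hxx i l hil hi4 hl4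
    have xy14 := Hxy i l hil hi4 hl4
    have yx14 := Hyx i l hil hi4 hl4
    have yy14 := Hyy i l hil hi4 hl4
    have xx23 := Hxx k j hkj hk4 hj4
    have xy23 := Hxy k j hkj hk4 hj4
    have yx23 := Hyx k j hkj hk4 hj4
    have yy23 := Hyy k j hkj hk4 hj4
    have xx24 := Hxx k l hkl hk4 hl4
    have xy24 := Hxy k l hkl hk4 hl4
    have yx24 := Hyx k l hkl hk4 hl4
    have yy24 := Hyy k l hkl hk4 hl4
    have xx34 := Hxx j l hjl hj4 hl4
    have xy34 := Hxy j l hjl hj4 hl4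
    have yx34 := Hyx j l hjl hj4 hl4
    have yy34 := Hyy j l hjl hj4 hl4
    rw [hD i j, hD k l, hD i k, hD j l]
    simp only [sub_mul, mul_sub, smul_sub, smul_add, mul_add, add_mul,
      smul_mul_assoc, mul_smul_comm, smul_smul, mul_assoc,
      xx12, xy12, yx12, yy12, xx13, xy13, yx13, yy13, xx14, xy14, yx14, yy14,
      xx23, xy23, yx23, yy23, xx24, xy24, yx24, yy24, xx34, xy34, yx34, yy34,
      liftmul xx12, liftmul xy12, liftmul yx12, liftmul yy12,
      liftmul xx13, liftmul xy13, liftmul yx13, liftmul yy13,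
      liftmul xx14, liftmul xy14, liftmul yx14, liftmul yy14,
      liftmul xx23, liftmul xy23, liftmul yx23, liftmul yy23,
      liftmul xx24, liftmul xy24, liftmul yx24, liftmul yy24,
      liftmul xx34, liftmul xy34, liftmul yx34, liftmul yy34]
    match_scalars
    · ring1
    · linear_combination (-1*qi + q + q*qi^2 + -1*q^2*qi) * hq
    · linear_combination (q*qi) * hq
    · linear_combination (q*qi) * hq
    · linear_combination (-1*qi^2 + 2*q*qi + q*qi^3 + -1*q^2 + -2*q^2*qi^2 + q^3*qi) * hq
    · ring1
  · intro i k l j hik hkl hlj hj4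
    have hiv : i.val < k.val := hik
    have hkv : k.val < l.val := hkl
    have hlv : l.val < j.val := hlj
    have hi4 : i.val < 4 := by omega
    have hk4 : k.val < 4 := by omega
    have hl4 : l.val < 4 := by omega
    have hij : i < j := lt_trans (lt_trans hik hkl) hlj
    have hil : i < l := lt_trans hik hkl
    have hkj : k < j := lt_trans hkl hlj
    have xx12 := Hxx i k hik hi4 hk4
    have xy12 := Hxy i k hik hi4 hk4
    have yx12 := Hyx i k hik hi4 hk4
    have yy12 := Hyy i k hik hi4 hk4
    have xx13 := Hxx i l hil hi4 hl4
    have xy13 := Hxy i l hil hi4 hl4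
    have yx13 := Hyx i l hil hi4 hl4
    have yy13 := Hyy i l hil hi4 hl4
    have xx14 := Hxx i j hij hi4 hj4
    have xy14 := Hxy i j hij hi4 hj4
    have yx14 := Hyx i j hij hi4 hj4
    have yy14 := Hyy i j hij hi4 hj4
    have xx23 := Hxx k l hkl hk4 hl4
    have xy23 := Hxy k l hkl hk4 hl4
    have yx23 := Hyx k l hkl hk4 hl4
    have yy23 := Hyy k l hkl hk4 hl4
    have xx24 := Hxx k j hkj hk4 hj4
    have xy24 := Hxy k j hkj hk4 hj4
    have yx24 := Hyx k j hkj hk4 hj4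
    have yy24 := Hyy k j hkj hk4 hj4
    have xx34 := Hxx l j hlj hl4 hj4
    have xy34 := Hxy l j hlj hl4 hj4
    have yx34 := Hyx l j hlj hl4 hj4
    have yy34 := Hyy l j hlj hl4 hj4
    rw [hD i j, hD k l]
    simp only [sub_mul, mul_sub, smul_sub, smul_add, mul_add, add_mul,
      smul_mul_assoc, mul_smul_comm, smul_smul, mul_assoc,
      xx12, xy12, yx12, yy12, xx13, xy13, yx13, yy13, xx14, xy14, yx14, yy14,
      xx23, xy23, yx23, yy23, xx24, xy24, yx24, yy24, xx34, xy34, yx34, yy34,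
      liftmul xx12, liftmul xy12, liftmul yx12, liftmul yy12,
      liftmul xx13, liftmul xy13, liftmul yx13, liftmul yy13,
      liftmul xx14, liftmul xy14, liftmul yx14, liftmul yy14,
      liftmul xx23, liftmul xy23, liftmul yx23, liftmul yy23,
      liftmul xx24, liftmul xy24, liftmul yx24, liftmul yy24,
      liftmul xx34, liftmul xy34, liftmul yx34, liftmul yy34]
    match_scalars
    · ring1
    · linear_combination (-1*qi + q) * hq
    · ring1
    · ring1
    · ring1
    · linear_combination (qi + -1*q) * hq
end

section
/- In M_q(4|2), with D_{in} := a_{i1}a_{n2} − q⁻¹a_{i2}a_{n1} for 1 ≤ i ≤ 4, n = 5,6 (odd elements), and D_{nn} := a_{n1}a_{n2}, one has D_{in}D_{jn} = q D_{ij}D_{nn} for 1 ≤ i < j ≤ 4, and D_{in}D_{nn} = 0. -/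
/-- in M_q(4|2), with D_{nn} = a_{n1}a_{n2} (n = 5,6), for
1 ≤ i < j ≤ 4 one has D_{in}D_{jn} = qD_{ij}D_{nn}, and D_{in}D_{nn} = 0. -/
theorem stmt_10
    (R : Type*) [CommRing R] (q qi : R) (hq : q * qi = 1)
    (A : Type*) [Ring A] [Algebra R A] (a : Fin 6 → Fin 6 → A)
    (p : Fin 6 → ℕ) (hp : ∀ i, p i = if i.val < 4 then 0 else 1)
    -- Manin relations for M_q(4|2)
    (hrow : ∀ i j l : Fin 6, j < l →
      a i j * a i l = ((-1 : ℤ) ^ ((p i + p j) * (p i + p l))) •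
        ((if p i = 0 then qi else q) • (a i l * a i j)))
    (hcol : ∀ i k j : Fin 6, i < k →
      a i j * a k j = ((-1 : ℤ) ^ ((p i + p j) * (p k + p j))) •
        ((if p j = 0 then qi else q) • (a k j * a i j)))
    (hmix : ∀ i k j l : Fin 6, i < k → l < j →
      a i j * a k l = ((-1 : ℤ) ^ ((p i + p j) * (p k + p l))) • (a k l * a i j))
    (hdiag : ∀ i k j l : Fin 6, i < k → j < l →
      a i j * a k l - ((-1 : ℤ) ^ ((p i + p j) * (p k + p l))) • (a k l * a i j)
        = ((-1 : ℤ) ^ ((p i + p j) * (p k + p l))) • ((qi - q) • (a k j * a i l)))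
    (hsq : ∀ i j : Fin 6, (p i + p j) % 2 = 1 → a i j * a i j = 0)
    -- the quantum minors built from the first two columns
    (D : Fin 6 → Fin 6 → A)
    (hD : ∀ r s : Fin 6, D r s = a r 0 * a s 1 - qi • (a r 1 * a s 0)) :
    ∀ n : Fin 6, (n = 4 ∨ n = 5) →
      (∀ i j : Fin 6, i < j → j.val < 4 →
        D i n * D j n = q • (D i j * (a n 0 * a n 1)))
      ∧ (∀ i : Fin 6, i.val < 4 → D i n * (a n 0 * a n 1) = 0) := by
  intro n hn
  have hq1 : qi * q = 1 := by rw [mul_comm]; exact hq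
  have hp0 : p (0 : Fin 6) = 0 := by rw [hp]; rfl
  have hp1 : p (1 : Fin 6) = 0 := by rw [hp]; rfl
  have hpn : p n = 1 := by rcases hn with rfl | rfl <;> rw [hp] <;> rfl
  have hn4 : 4 ≤ n.val := by rcases hn with rfl | rfl <;> decide
  have hee : a n 0 * a n 0 = 0 := hsq n 0 (by rw [hpn, hp0])
  have hff : a n 1 * a n 1 = 0 := hsq n 1 (by rw [hpn, hp1])
  have hfe : a n 1 * a n 0 = -(qi • (a n 0 * a n 1)) := by
    have h := hrow n 0 1 (by decide)
    rw [hpn, hp0, hp1] at h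
    norm_num at h
    rw [h, smul_neg, neg_neg, smul_smul, hq1, one_smul]
  have heeL : ∀ t : A, a n 0 * (a n 0 * t) = 0 := fun t => by
    rw [← mul_assoc, hee, zero_mul]
  have hffL : ∀ t : A, a n 1 * (a n 1 * t) = 0 := fun t => by
    rw [← mul_assoc, hff, zero_mul]
  have hfeL : ∀ t : A, a n 1 * (a n 0 * t) = -(qi • (a n 0 * (a n 1 * t))) := fun t => by
    rw [← mul_assoc, hfe, neg_mul, smul_mul_assoc, mul_assoc]
  constructor
  · intro i j hij hj4
    have hij' : i.val < j.val := hij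
    have hi4 : i.val < 4 := lt_trans hij' hj4
    have hin : i < n := by rw [Fin.lt_def]; omega
    have hjn : j < n := by rw [Fin.lt_def]; omega
    have hpi : p i = 0 := by rw [hp, if_pos hi4]
    have hpj : p j = 0 := by rw [hp, if_pos hj4]
    -- x*v = v*x + λ (u*y)
    have hxv : a i 0 * a j 1 = a j 1 * a i 0 + (qi - q) • (a j 0 * a i 1) := by
      have h := hdiag i j 0 1 hij (by decide)
      rw [hpi, hpj, hp0, hp1] at h
      norm_num at h
      rw [← sub_eq_iff_eq_add'] ; exact h
    -- f*u = u*f - λ (e*v)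
    have hfu : a n 1 * a j 0 = a j 0 * a n 1 - (qi - q) • (a n 0 * a j 1) := by
      have h := hdiag j n 0 1 hjn (by decide)
      rw [hpn, hpj, hp0, hp1] at h
      norm_num at h
      rw [sub_eq_iff_eq_add.mp h, add_sub_cancel_left]
    -- f*v = q (v*f)
    have hfv : a n 1 * a j 1 = q • (a j 1 * a n 1) := by
      have h := hcol j n 1 hjn
      rw [hpn, hpj, hp1] at h
      norm_num at h
      rw [h, smul_smul, hq, one_smul]
    -- e*u = q (u*e)
    have heu : a n 0 * a j 0 = q • (a j 0 * a n 0) := by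
      have h := hcol j n 0 hjn
      rw [hpn, hpj, hp0] at h
      norm_num at h
      rw [h, smul_smul, hq, one_smul]
    -- e*v = v*e
    have hev : a n 0 * a j 1 = a j 1 * a n 0 := by
      have h := hmix j n 1 0 hjn (by decide)
      rw [hpn, hpj, hp0, hp1] at h
      norm_num at h
      exact h.symm
    -- y*u = u*y
    have hyu : a i 1 * a j 0 = a j 0 * a i 1 := by
      have h := hmix i j 1 0 hij (by decide)
      rw [hpi, hpj, hp0, hp1] at h
      norm_num at h
      exact h
    have hxvL : ∀ t : A, a i 0 * (a j 1 * t)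
        = a j 1 * (a i 0 * t) + (qi - q) • (a j 0 * (a i 1 * t)) := fun t => by
      rw [← mul_assoc, hxv, add_mul, smul_mul_assoc, mul_assoc, mul_assoc]
    have hfuL : ∀ t : A, a n 1 * (a j 0 * t)
        = a j 0 * (a n 1 * t) - (qi - q) • (a n 0 * (a j 1 * t)) := fun t => by
      rw [← mul_assoc, hfu, sub_mul, smul_mul_assoc, mul_assoc, mul_assoc]
    have hfvL : ∀ t : A, a n 1 * (a j 1 * t) = q • (a j 1 * (a n 1 * t)) := fun t => by
      rw [← mul_assoc, hfv, smul_mul_assoc, mul_assoc]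
    have heuL : ∀ t : A, a n 0 * (a j 0 * t) = q • (a j 0 * (a n 0 * t)) := fun t => by
      rw [← mul_assoc, heu, smul_mul_assoc, mul_assoc]
    have hevL : ∀ t : A, a n 0 * (a j 1 * t) = a j 1 * (a n 0 * t) := fun t => by
      rw [← mul_assoc, hev, mul_assoc]
    have hyuL : ∀ t : A, a i 1 * (a j 0 * t) = a j 0 * (a i 1 * t) := fun t => by
      rw [← mul_assoc, hyu, mul_assoc]
    rw [hD, hD, hD]
    simp only [mul_sub, sub_mul, mul_add, add_mul, smul_mul_assoc, mul_smul_comm,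
      smul_smul, smul_sub, smul_add, smul_neg, neg_smul, mul_neg, neg_mul, mul_assoc,
      hxvL, hfuL, hfvL, heuL, hevL, hyuL, hfeL, heeL, hffL,
      hxv, hfu, hfv, heu, hev, hyu, hfe, hee, hff,
      mul_zero, zero_mul, smul_zero, sub_zero, zero_sub, neg_neg]
    match_scalars
    · linear_combination qi * hq1
    · linear_combination (qi^2 - qi*q) * hq1
  · intro i hi4
    rw [hD]
    simp only [sub_mul, smul_mul_assoc, mul_assoc, hfeL, heeL, hff, mul_zero,
      smul_zero, neg_zero, zero_mul, sub_zero, zero_sub, neg_zero, mul_neg, smul_neg]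
end

section
/- In M_q(4|2), with D_{i5}, D_{j6} as above (odd quantum minors mixing rows i ≤ 4 and odd rows 5,6), for 1 ≤ i < j ≤ 4: D_{i5}D_{j6} + q⁻¹D_{i6}D_{j5} = q D_{ij}D₅₆, where D₅₆ := a₅₁a₆₂ − q⁻¹a₅₂a₆₁. -/
section aux
variable {R A : Type*} [CommRing R] [Ring A] [Algebra R A]

lemma sw_ext' {x y : A} {r : R} (h : y * x = r • (x * y)) (c : A) :
    y * (x * c) = r • (x * (y * c)) := by
  rw [← mul_assoc, h, smul_mul_assoc, mul_assoc]

lemma swns_ext' {x y : A} {r : R} (h : y * x = -(r • (x * y))) (c : A) :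
    y * (x * c) = -(r • (x * (y * c))) := by
  rw [← mul_assoc, h, neg_mul, smul_mul_assoc, mul_assoc]

lemma swc_ext' {x y : A} (h : y * x = x * y) (c : A) :
    y * (x * c) = x * (y * c) := by
  rw [← mul_assoc, h, mul_assoc]

lemma swn_ext' {x y : A} (h : y * x = -(x * y)) (c : A) :
    y * (x * c) = -(x * (y * c)) := by
  rw [← mul_assoc, h, neg_mul, mul_assoc]

lemma swd_ext' {x y w z : A} {s : R} (h : y * x = x * y + s • (w * z)) (c : A) :
    y * (x * c) = x * (y * c) + s • (w * (z * c)) := by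
  rw [← mul_assoc, h, add_mul, smul_mul_assoc, mul_assoc, mul_assoc]

lemma swdn_ext' {x y w z : A} {s : R} (h : y * x = -(x * y) + s • (w * z)) (c : A) :
    y * (x * c) = -(x * (y * c)) + s • (w * (z * c)) := by
  rw [← mul_assoc, h, add_mul, neg_mul, smul_mul_assoc, mul_assoc, mul_assoc]

lemma flip_pos' {q qi : R} (hq : q * qi = 1) {x y : A} (h : x = qi • y) : y = q • x := by
  rw [h, smul_smul, hq, one_smul]

lemma flip_neg' {q qi : R} (hq : q * qi = 1) {x y : A} (h : x = -(qi • y)) : y = -(q • x) := by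
  rw [h, smul_neg, smul_smul, hq, one_smul, neg_neg]

end aux

/-- in M_q(4|2), for 1 ≤ i < j ≤ 4,
D_{i5}D_{j6} + q⁻¹D_{i6}D_{j5} = qD_{ij}D₅₆. -/
theorem stmt_11
    (R : Type*) [CommRing R] (q qi : R) (hq : q * qi = 1)
    (A : Type*) [Ring A] [Algebra R A] (a : Fin 6 → Fin 6 → A)
    (p : Fin 6 → ℕ) (hp : ∀ i, p i = if i.val < 4 then 0 else 1)
    -- Manin relations for M_q(4|2)
    (hrow : ∀ i j l : Fin 6, j < l →
      a i j * a i l = ((-1 : ℤ) ^ ((p i + p j) * (p i + p l))) •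
        ((if p i = 0 then qi else q) • (a i l * a i j)))
    (hcol : ∀ i k j : Fin 6, i < k →
      a i j * a k j = ((-1 : ℤ) ^ ((p i + p j) * (p k + p j))) •
        ((if p j = 0 then qi else q) • (a k j * a i j)))
    (hmix : ∀ i k j l : Fin 6, i < k → l < j →
      a i j * a k l = ((-1 : ℤ) ^ ((p i + p j) * (p k + p l))) • (a k l * a i j))
    (hdiag : ∀ i k j l : Fin 6, i < k → j < l →
      a i j * a k l - ((-1 : ℤ) ^ ((p i + p j) * (p k + p l))) • (a k l * a i j)
        = ((-1 : ℤ) ^ ((p i + p j) * (p k + p l))) • ((qi - q) • (a k j * a i l)))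
    (hsq : ∀ i j : Fin 6, (p i + p j) % 2 = 1 → a i j * a i j = 0)
    -- the quantum minors built from the first two columns
    (D : Fin 6 → Fin 6 → A)
    (hD : ∀ r s : Fin 6, D r s = a r 0 * a s 1 - qi • (a r 1 * a s 0)) :
    ∀ i j : Fin 6, i < j → j.val < 4 →
      D i 4 * D j 5 + qi • (D i 5 * D j 4) = q • (D i j * D 4 5) := by
  intro i j hij hj4
  have hi4 : i.val < 4 := lt_trans hij hj4
  have hi4f : i < (4 : Fin 6) := by omega
  have hj4f : j < (4 : Fin 6) := by omega
  have hi5f : i < (5 : Fin 6) := by omega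
  have hj5f : j < (5 : Fin 6) := by omega
  have pi0 : p i = 0 := by rw [hp]; simp [hi4]
  have pj0 : p j = 0 := by rw [hp]; simp [hj4]
  have p40 : p 4 = 1 := by rw [hp]; decide
  have p50 : p 5 = 1 := by rw [hp]; decide
  have p00 : p 0 = 0 := by rw [hp]; norm_num
  have p10 : p 1 = 0 := by rw [hp]; norm_num
  -- row relations
  have e10 : a i 1 * a i 0 = q • (a i 0 * a i 1) := by
    have h := hrow i 0 1 (by decide)
    rw [pi0, p00, p10] at h; norm_num at h
    exact flip_pos' hq h
  have e32 : a j 1 * a j 0 = q • (a j 0 * a j 1) := by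
    have h := hrow j 0 1 (by decide)
    rw [pj0, p00, p10] at h; norm_num at h
    exact flip_pos' hq h
  have e54 : a 4 1 * a 4 0 = -(qi • (a 4 0 * a 4 1)) := by
    have h := hrow 4 0 1 (by decide)
    rw [p40, p00, p10] at h; norm_num [neg_one_zsmul] at h
    have hq' : qi * q = 1 := by rw [mul_comm]; exact hq
    exact flip_neg' hq' h
  have e76 : a 5 1 * a 5 0 = -(qi • (a 5 0 * a 5 1)) := by
    have h := hrow 5 0 1 (by decide)
    rw [p50, p00, p10] at h; norm_num [neg_one_zsmul] at h
    have hq' : qi * q = 1 := by rw [mul_comm]; exact hq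
    exact flip_neg' hq' h
  -- column relations
  have e20 : a j 0 * a i 0 = q • (a i 0 * a j 0) := by
    have h := hcol i j 0 hij
    rw [pi0, pj0, p00] at h; norm_num at h
    exact flip_pos' hq h
  have e31 : a j 1 * a i 1 = q • (a i 1 * a j 1) := by
    have h := hcol i j 1 hij
    rw [pi0, pj0, p10] at h; norm_num at h
    exact flip_pos' hq h
  have e40 : a 4 0 * a i 0 = q • (a i 0 * a 4 0) := by
    have h := hcol i 4 0 hi4f
    rw [pi0, p40, p00] at h; norm_num at h
    exact flip_pos' hq h
  have e42 : a 4 0 * a j 0 = q • (a j 0 * a 4 0) := by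
    have h := hcol j 4 0 hj4f
    rw [pj0, p40, p00] at h; norm_num at h
    exact flip_pos' hq h
  have e51 : a 4 1 * a i 1 = q • (a i 1 * a 4 1) := by
    have h := hcol i 4 1 hi4f
    rw [pi0, p40, p10] at h; norm_num at h
    exact flip_pos' hq h
  have e53 : a 4 1 * a j 1 = q • (a j 1 * a 4 1) := by
    have h := hcol j 4 1 hj4f
    rw [pj0, p40, p10] at h; norm_num at h
    exact flip_pos' hq h
  have e60 : a 5 0 * a i 0 = q • (a i 0 * a 5 0) := by
    have h := hcol i 5 0 hi5f
    rw [pi0, p50, p00] at h; norm_num at h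
    exact flip_pos' hq h
  have e62 : a 5 0 * a j 0 = q • (a j 0 * a 5 0) := by
    have h := hcol j 5 0 hj5f
    rw [pj0, p50, p00] at h; norm_num at h
    exact flip_pos' hq h
  have e71 : a 5 1 * a i 1 = q • (a i 1 * a 5 1) := by
    have h := hcol i 5 1 hi5f
    rw [pi0, p50, p10] at h; norm_num at h
    exact flip_pos' hq h
  have e73 : a 5 1 * a j 1 = q • (a j 1 * a 5 1) := by
    have h := hcol j 5 1 hj5f
    rw [pj0, p50, p10] at h; norm_num at h
    exact flip_pos' hq h
  have e64 : a 5 0 * a 4 0 = -(q • (a 4 0 * a 5 0)) := by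
    have h := hcol 4 5 0 (by decide)
    rw [p40, p50, p00] at h; norm_num [neg_one_zsmul] at h
    exact flip_neg' hq h
  have e75 : a 5 1 * a 4 1 = -(q • (a 4 1 * a 5 1)) := by
    have h := hcol 4 5 1 (by decide)
    rw [p40, p50, p10] at h; norm_num [neg_one_zsmul] at h
    exact flip_neg' hq h
  -- mixed (commuting) relations
  have e21 : a j 0 * a i 1 = a i 1 * a j 0 := by
    have h := hmix i j 1 0 hij (by decide)
    rw [pi0, pj0, p00, p10] at h; norm_num at h
    exact h.symm
  have e41 : a 4 0 * a i 1 = a i 1 * a 4 0 := by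
    have h := hmix i 4 1 0 hi4f (by decide)
    rw [pi0, p40, p00, p10] at h; norm_num at h
    exact h.symm
  have e43 : a 4 0 * a j 1 = a j 1 * a 4 0 := by
    have h := hmix j 4 1 0 hj4f (by decide)
    rw [pj0, p40, p00, p10] at h; norm_num at h
    exact h.symm
  have e61 : a 5 0 * a i 1 = a i 1 * a 5 0 := by
    have h := hmix i 5 1 0 hi5f (by decide)
    rw [pi0, p50, p00, p10] at h; norm_num at h
    exact h.symm
  have e63 : a 5 0 * a j 1 = a j 1 * a 5 0 := by
    have h := hmix j 5 1 0 hj5f (by decide)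
    rw [pj0, p50, p00, p10] at h; norm_num at h
    exact h.symm
  have e65 : a 5 0 * a 4 1 = -(a 4 1 * a 5 0) := by
    have h := hmix 4 5 1 0 (by decide) (by decide)
    rw [p40, p50, p00, p10] at h; norm_num [neg_one_zsmul] at h
    rw [h, neg_neg]
  -- diagonal relations
  have e30 : a j 1 * a i 0 = a i 0 * a j 1 + (q - qi) • (a i 1 * a j 0) := by
    have h := hdiag i j 0 1 hij (by decide)
    rw [pi0, pj0, p00, p10] at h; norm_num at h
    rw [e21] at h
    rw [show q - qi = -(qi - q) from by ring, neg_smul, ← h]; abel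
  have e50 : a 4 1 * a i 0 = a i 0 * a 4 1 + (q - qi) • (a i 1 * a 4 0) := by
    have h := hdiag i 4 0 1 hi4f (by decide)
    rw [pi0, p40, p00, p10] at h; norm_num at h
    rw [e41] at h
    rw [show q - qi = -(qi - q) from by ring, neg_smul, ← h]; abel
  have e52 : a 4 1 * a j 0 = a j 0 * a 4 1 + (q - qi) • (a j 1 * a 4 0) := by
    have h := hdiag j 4 0 1 hj4f (by decide)
    rw [pj0, p40, p00, p10] at h; norm_num at h
    rw [e43] at h
    rw [show q - qi = -(qi - q) from by ring, neg_smul, ← h]; abel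
  have e70 : a 5 1 * a i 0 = a i 0 * a 5 1 + (q - qi) • (a i 1 * a 5 0) := by
    have h := hdiag i 5 0 1 hi5f (by decide)
    rw [pi0, p50, p00, p10] at h; norm_num at h
    rw [e61] at h
    rw [show q - qi = -(qi - q) from by ring, neg_smul, ← h]; abel
  have e72 : a 5 1 * a j 0 = a j 0 * a 5 1 + (q - qi) • (a j 1 * a 5 0) := by
    have h := hdiag j 5 0 1 hj5f (by decide)
    rw [pj0, p50, p00, p10] at h; norm_num at h
    rw [e63] at h
    rw [show q - qi = -(qi - q) from by ring, neg_smul, ← h]; abel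
  have e74 : a 5 1 * a 4 0 = -(a 4 0 * a 5 1) + (qi - q) • (a 4 1 * a 5 0) := by
    have h := hdiag 4 5 0 1 (by decide) (by decide)
    rw [p40, p50, p00, p10] at h; norm_num [neg_one_zsmul] at h
    rw [e65] at h
    rw [smul_neg, neg_neg] at h
    rw [← h]; abel
  -- now expand and sort
  simp only [hD]
  simp only [mul_sub, sub_mul, smul_sub, mul_add, add_mul, smul_add, smul_neg, neg_mul,
    mul_neg, neg_neg, smul_smul, smul_mul_assoc, mul_smul_comm, mul_assoc,
    e10, sw_ext' e10, e20, sw_ext' e20, e21, swc_ext' e21, e30, swd_ext' e30,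
    e31, sw_ext' e31, e32, sw_ext' e32,
    e40, sw_ext' e40, e41, swc_ext' e41, e42, sw_ext' e42, e43, swc_ext' e43,
    e50, swd_ext' e50, e51, sw_ext' e51, e52, swd_ext' e52, e53, sw_ext' e53,
    e54, swns_ext' e54,
    e60, sw_ext' e60, e61, swc_ext' e61, e62, sw_ext' e62, e63, swc_ext' e63,
    e64, swns_ext' e64, e65, swn_ext' e65,
    e70, swd_ext' e70, e71, sw_ext' e71, e72, swd_ext' e72, e73, sw_ext' e73,
    e74, swdn_ext' e74, e75, swns_ext' e75, e76, swns_ext' e76]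
  match_scalars <;>
    first
      | ring1
      | linear_combination hq
      | linear_combination q * hq
      | linear_combination qi * hq
      | linear_combination (q * q) * hq
      | linear_combination (qi * qi) * hq
      | linear_combination (q + qi) * hq
      | linear_combination (q - qi) * hq
      | linear_combination (qi - q) * hq
      | linear_combination 2 * hq
      | linear_combination (q * q * q) * hq
      | linear_combination (qi * qi * qi) * hq
      | linear_combination (1 + q * qi) * hq
      | linear_combination (qi * qi * q) * hq
      | linear_combination (q * q * qi) * hq
      | linear_combination (-(q^2*qi) - 1) * hq
      | linear_combination (q*qi - q^2*qi - qi^2) * hq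
      | linear_combination (-(q^2*qi) - qi^2) * hq
      | linear_combination (q^2*qi + qi^2 - 1) * hq
      | linear_combination (q^2*qi + q*qi) * hq
      | linear_combination (q^2*qi) * hq
      | linear_combination (-1 : R) * hq
      | linear_combination (-(qi*qi)) * hq
      | linear_combination (q*qi - qi*qi) * hq
end

section
/- In M_q(4|2), for 1 ≤ i ≤ 4 and n = 5 or 6, the relations D_{i5}D₆₆ = −q⁻¹D_{i6}D₅₆ and D_{i6}D₅₅ = −q²D_{i5}D₅₆ hold, where D_{in} := a_{i1}a_{n2} − q⁻¹a_{i2}a_{n1}, D_{nn} := a_{n1}a_{n2}, D₅₆ := a₅₁a₆₂ − q⁻¹a₅₂a₆₁. -/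
/-- in M_q(4|2), for 1 ≤ i ≤ 4,
D_{i5}D₆₆ = −q⁻¹D_{i6}D₅₆ and D_{i6}D₅₅ = −q²D_{i5}D₅₆. -/
theorem stmt_12
    (R : Type*) [CommRing R] (q qi : R) (hq : q * qi = 1)
    (A : Type*) [Ring A] [Algebra R A] (a : Fin 6 → Fin 6 → A)
    (p : Fin 6 → ℕ) (hp : ∀ i, p i = if i.val < 4 then 0 else 1)
    -- Manin relations for M_q(4|2)
    (hrow : ∀ i j l : Fin 6, j < l →
      a i j * a i l = ((-1 : ℤ) ^ ((p i + p j) * (p i + p l))) •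
        ((if p i = 0 then qi else q) • (a i l * a i j)))
    (hcol : ∀ i k j : Fin 6, i < k →
      a i j * a k j = ((-1 : ℤ) ^ ((p i + p j) * (p k + p j))) •
        ((if p j = 0 then qi else q) • (a k j * a i j)))
    (hmix : ∀ i k j l : Fin 6, i < k → l < j →
      a i j * a k l = ((-1 : ℤ) ^ ((p i + p j) * (p k + p l))) • (a k l * a i j))
    (hdiag : ∀ i k j l : Fin 6, i < k → j < l →
      a i j * a k l - ((-1 : ℤ) ^ ((p i + p j) * (p k + p l))) • (a k l * a i j)
        = ((-1 : ℤ) ^ ((p i + p j) * (p k + p l))) • ((qi - q) • (a k j * a i l)))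
    (hsq : ∀ i j : Fin 6, (p i + p j) % 2 = 1 → a i j * a i j = 0)
    -- the quantum minors built from the first two columns
    (D : Fin 6 → Fin 6 → A)
    (hD : ∀ r s : Fin 6, D r s = a r 0 * a s 1 - qi • (a r 1 * a s 0)) :
    ∀ i : Fin 6, i.val < 4 →
      D i 4 * (a 5 0 * a 5 1) = - (qi • (D i 5 * D 4 5))
      ∧ D i 5 * (a 4 0 * a 4 1) = - ((q * q) • (D i 4 * D 4 5)) := by
  intro i _
  have hp0 : p 0 = 0 := by rw [hp]; rfl
  have hp1 : p 1 = 0 := by rw [hp]; rfl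
  have hp4 : p 4 = 1 := by rw [hp]; rfl
  have hp5 : p 5 = 1 := by rw [hp]; rfl
  -- b = a 4 0, c = a 4 1, d = a 5 0, e = a 5 1
  have hbc : a 4 0 * a 4 1 = -(q • (a 4 1 * a 4 0)) := by
    have h := hrow 4 0 1 (by decide)
    simp only [hp0, hp1, hp4] at h
    simpa using h
  have hde : a 5 0 * a 5 1 = -(q • (a 5 1 * a 5 0)) := by
    have h := hrow 5 0 1 (by decide)
    simp only [hp0, hp1, hp5] at h
    simpa using h
  have hbd : a 4 0 * a 5 0 = -(qi • (a 5 0 * a 4 0)) := by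
    have h := hcol 4 5 0 (by decide)
    simp only [hp0, hp4, hp5] at h
    simpa using h
  have hce : a 4 1 * a 5 1 = -(qi • (a 5 1 * a 4 1)) := by
    have h := hcol 4 5 1 (by decide)
    simp only [hp1, hp4, hp5] at h
    simpa using h
  have hcd : a 4 1 * a 5 0 = -(a 5 0 * a 4 1) := by
    have h := hmix 4 5 1 0 (by decide) (by decide)
    simp only [hp0, hp1, hp4, hp5] at h
    simpa using h
  have hbe : a 4 0 * a 5 1 = -(a 5 1 * a 4 0) - (qi - q) • (a 5 0 * a 4 1) := by
    have h := hdiag 4 5 0 1 (by decide) (by decide)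
    simp only [hp0, hp1, hp4, hp5] at h
    norm_num at h
    have h2 := eq_sub_of_add_eq' h
    rw [h2]; abel
  -- reoriented plain rules
  have hed : a 5 1 * a 5 0 = -(qi • (a 5 0 * a 5 1)) := by
    rw [hde, smul_neg, neg_neg, smul_smul, mul_comm qi q, hq, one_smul]
  have hcb : a 4 1 * a 4 0 = -(qi • (a 4 0 * a 4 1)) := by
    rw [hbc, smul_neg, neg_neg, smul_smul, mul_comm qi q, hq, one_smul]
  -- squares
  have hbb : a 4 0 * a 4 0 = 0 := hsq 4 0 (by rw [hp4, hp0])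
  have hcc : a 4 1 * a 4 1 = 0 := hsq 4 1 (by rw [hp4, hp1])
  have hdd : a 5 0 * a 5 0 = 0 := hsq 5 0 (by rw [hp5, hp0])
  have hee : a 5 1 * a 5 1 = 0 := hsq 5 1 (by rw [hp5, hp1])
  -- nested versions
  have hedz : ∀ z, a 5 1 * (a 5 0 * z) = -(qi • (a 5 0 * (a 5 1 * z))) := fun z => by
    rw [← mul_assoc, hed, neg_mul, smul_mul_assoc, mul_assoc]
  have hbdz : ∀ z, a 4 0 * (a 5 0 * z) = -(qi • (a 5 0 * (a 4 0 * z))) := fun z => by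
    rw [← mul_assoc, hbd, neg_mul, smul_mul_assoc, mul_assoc]
  have hcez : ∀ z, a 4 1 * (a 5 1 * z) = -(qi • (a 5 1 * (a 4 1 * z))) := fun z => by
    rw [← mul_assoc, hce, neg_mul, smul_mul_assoc, mul_assoc]
  have hcbz : ∀ z, a 4 1 * (a 4 0 * z) = -(qi • (a 4 0 * (a 4 1 * z))) := fun z => by
    rw [← mul_assoc, hcb, neg_mul, smul_mul_assoc, mul_assoc]
  have hcdz : ∀ z, a 4 1 * (a 5 0 * z) = -(a 5 0 * (a 4 1 * z)) := fun z => by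
    rw [← mul_assoc, hcd, neg_mul, mul_assoc]
  have hbez : ∀ z, a 4 0 * (a 5 1 * z)
      = -(a 5 1 * (a 4 0 * z)) - (qi - q) • (a 5 0 * (a 4 1 * z)) := fun z => by
    rw [← mul_assoc, hbe, sub_mul, neg_mul, smul_mul_assoc, mul_assoc, mul_assoc]
  have hbbz : ∀ z, a 4 0 * (a 4 0 * z) = 0 := fun z => by
    rw [← mul_assoc, hbb, zero_mul]
  have hccz : ∀ z, a 4 1 * (a 4 1 * z) = 0 := fun z => by
    rw [← mul_assoc, hcc, zero_mul]
  have hddz : ∀ z, a 5 0 * (a 5 0 * z) = 0 := fun z => by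
    rw [← mul_assoc, hdd, zero_mul]
  have heez : ∀ z, a 5 1 * (a 5 1 * z) = 0 := fun z => by
    rw [← mul_assoc, hee, zero_mul]
  constructor
  · simp only [hD, sub_mul, mul_sub, smul_mul_assoc, mul_smul_comm, smul_smul,
      mul_assoc, neg_mul, mul_neg, smul_neg, neg_neg, smul_sub, sub_zero, zero_sub,
      smul_zero, mul_zero, zero_mul, neg_zero,
      hedz, hed, hbdz, hbd, hbez, hbe, hcdz, hcd, hcez, hce, hcbz, hcb,
      hbbz, hbb, hccz, hcc, hddz, hdd, heez, hee]
    match_scalars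
    · linear_combination (-qi) * hq
    · ring
  · simp only [hD, sub_mul, mul_sub, smul_mul_assoc, mul_smul_comm, smul_smul,
      mul_assoc, neg_mul, mul_neg, smul_neg, neg_neg, smul_sub, sub_zero, zero_sub,
      smul_zero, mul_zero, zero_mul, neg_zero,
      hedz, hed, hbdz, hbd, hbez, hbe, hcdz, hcd, hcez, hce, hcbz, hcb,
      hbbz, hbb, hccz, hcc, hddz, hdd, heez, hee]
    match_scalars
    · linear_combination (-(1 + q * qi)) * hq
    · linear_combination (qi * (q * qi + 1)) * hq
end

section
/- With H = ℂ[GL₂] and A = ℂ[S] as above, the algebra map j: H → A determined by j(g_{ij}) = a_{ij} (for i,j ∈ {1,2}) and j(T) = d₁₂⁻¹ is a right H-comodule map (δ ∘ j = (j ⊗ id) ∘ Δ) and is convolution invertible with convolution inverse h = j ∘ S, where S is the antipode of ℂ[GL₂]. Hence ℂ[S] is a cleft (trivial) H-Hopf–Galois extension of its coinvariants. -/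
open scoped TensorProduct

/-- with H = ℂ[GL₂] (Hopf algebra with comultiplication
Δ(g_{ij}) = Σ_k g_{ik} ⊗ g_{kj}, counit ε(g_{ij}) = δ_{ij}, antipode
S(g₁₁) = Tg₂₂, S(g₁₂) = −Tg₁₂, S(g₂₁) = −Tg₂₁, S(g₂₂) = Tg₁₁) and
A = ℂ[S] as before, the algebra map j : H → A with j(g_{ij}) = a_{ij}
(i,j ∈ {1,2}) and j(T) = d₁₂⁻¹ is a right H-comodule map
(δ ∘ j = (j ⊗ id) ∘ Δ) and is convolution invertible with convolution
inverse h = j ∘ S; hence ℂ[S] is a cleft (trivial) H-Hopf–Galois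
extension of its coinvariants. -/
theorem stmt_16 (R : Type*) [CommRing R]
    -- H = ℂ[GL₂] with its Hopf structure
    (H : Type*) [CommRing H] [Algebra R H]
    (g : Fin 2 → Fin 2 → H) (t : H)
    (ht : (g 0 0 * g 1 1 - g 0 1 * g 1 0) * t = 1)
    (hgen : Algebra.adjoin R
      ({t} ∪ Set.range (fun ij : Fin 2 × Fin 2 => g ij.1 ij.2)) = ⊤)
    (Δ : H →ₐ[R] H ⊗[R] H)
    (hΔ : ∀ i j, Δ (g i j) = ∑ k : Fin 2, g i k ⊗ₜ[R] g k j)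
    (hΔt : Δ t = t ⊗ₜ[R] t)
    (ε : H →ₐ[R] R)
    (hε : ∀ i j, ε (g i j) = if i = j then 1 else 0) (hεt : ε t = 1)
    (S : H →ₐ[R] H)
    (hS00 : S (g 0 0) = t * g 1 1) (hS01 : S (g 0 1) = -(t * g 0 1))
    (hS10 : S (g 1 0) = -(t * g 1 0)) (hS11 : S (g 1 1) = t * g 0 0)
    (hSt : S t = g 0 0 * g 1 1 - g 0 1 * g 1 0)
    -- A = ℂ[S], supercommutative, with the coaction δ
    (A : Type*) [Ring A] [Algebra R A]
    (a : Fin 6 → Fin 2 → A) (dinv : A)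
    (p : Fin 6 → ℕ) (hp : ∀ i, p i = if i.val < 4 then 0 else 1)
    (hcomm : ∀ (i k : Fin 6) (j l : Fin 2),
      a i j * a k l = ((-1 : ℤ) ^ (p i * p k)) • (a k l * a i j))
    (hsq : ∀ (k : Fin 6) (j : Fin 2), p k = 1 → a k j * a k j = 0)
    (hdinv1 : (a 0 0 * a 1 1 - a 0 1 * a 1 0) * dinv = 1)
    (hdinv2 : dinv * (a 0 0 * a 1 1 - a 0 1 * a 1 0) = 1)
    (hdinvc : ∀ i j, dinv * a i j = a i j * dinv)
    (δ : A →ₐ[R] A ⊗[R] H)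
    (hδ : ∀ i j, δ (a i j) = ∑ l : Fin 2, a i l ⊗ₜ[R] g l j)
    (hδd : δ dinv = dinv ⊗ₜ[R] t)
    -- the cleaving map j
    (j : H →ₐ[R] A)
    (hjg : ∀ i l : Fin 2, j (g i l) = a (Fin.castLE (by norm_num) i) l)
    (hjt : j t = dinv) :
    -- j is a right H-comodule map
    (∀ f : H, δ (j f) = Algebra.TensorProduct.map j (AlgHom.id R H) (Δ f))
    -- j is convolution invertible with convolution inverse h = j ∘ S
    ∧ (∀ f : H, LinearMap.mul' R A
        (TensorProduct.map j.toLinearMap (j.comp S).toLinearMap (Δ f))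
          = algebraMap R A (ε f))
    ∧ (∀ f : H, LinearMap.mul' R A
        (TensorProduct.map (j.comp S).toLinearMap j.toLinearMap (Δ f))
          = algebraMap R A (ε f)) := by
  classical
  -- commutative subalgebra containing the image of j
  have hcast : ∀ i : Fin 2, (Fin.castLE (show (2:ℕ) ≤ 6 by norm_num) i).val < 4 :=
    fun i => lt_of_lt_of_le i.isLt (by norm_num)
  have hcomm04 : ∀ (i k : Fin 6), i.val < 4 → k.val < 4 → ∀ (jj l : Fin 2),
      a i jj * a k l = a k l * a i jj := by
    intro i k hi hk jj l
    rw [hcomm i k jj l, hp, hp, if_pos hi, if_pos hk]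
    simp
  set sA : Set A := {dinv} ∪ Set.range
    (fun il : Fin 2 × Fin 2 => a (Fin.castLE (by norm_num) il.1) il.2) with hsA
  have hsAcomm : ∀ x ∈ sA, ∀ y ∈ sA, x * y = y * x := by
    rintro x (rfl | ⟨⟨i, jj⟩, rfl⟩) y (rfl | ⟨⟨k, l⟩, rfl⟩)
    · rfl
    · exact (hdinvc _ _)
    · exact (hdinvc _ _).symm
    · exact hcomm04 _ _ (hcast i) (hcast k) jj l
  set C : Subalgebra R A := Algebra.adjoin R sA with hC
  letI : CommRing C := Algebra.adjoinCommRingOfComm R hsAcomm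
  have hrange : ∀ f : H, j f ∈ C := by
    intro f
    have h1 : f ∈ Algebra.adjoin R
        ({t} ∪ Set.range (fun ij : Fin 2 × Fin 2 => g ij.1 ij.2)) := by
      rw [hgen]; trivial
    have h2 : j f ∈ (Algebra.adjoin R
        ({t} ∪ Set.range (fun ij : Fin 2 × Fin 2 => g ij.1 ij.2))).map j :=
      ⟨f, h1, rfl⟩
    rw [AlgHom.map_adjoin] at h2
    refine Algebra.adjoin_le ?_ h2
    rintro x ⟨y, (rfl | ⟨⟨i, l⟩, rfl⟩), rfl⟩
    · rw [hjt]; exact Algebra.subset_adjoin (Or.inl rfl)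
    · rw [hjg]; exact Algebra.subset_adjoin (Or.inr ⟨⟨i, l⟩, rfl⟩)
  set jC : H →ₐ[R] C := j.codRestrict C hrange with hjC
  set Φ₁ : H →ₐ[R] C := ((Algebra.TensorProduct.lmul' R).comp
    ((Algebra.TensorProduct.map jC (jC.comp S)).comp Δ)) with hΦ₁
  set Φ₂ : H →ₐ[R] C := ((Algebra.TensorProduct.lmul' R).comp
    ((Algebra.TensorProduct.map (jC.comp S) jC).comp Δ)) with hΦ₂
  have key : ∀ u : C ⊗[R] C,
      LinearMap.mul' R A (TensorProduct.map C.val.toLinearMap C.val.toLinearMap u)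
        = C.val (LinearMap.mul' R C u) := by
    intro u
    induction u using TensorProduct.induction_on with
    | zero => simp
    | tmul x y => simp
    | add x y hx hy => simp [map_add, hx, hy]
  have h1 : j.toLinearMap = C.val.toLinearMap ∘ₗ jC.toLinearMap :=
    LinearMap.ext fun x => rfl
  have h2 : (j.comp S).toLinearMap = C.val.toLinearMap ∘ₗ (jC.comp S).toLinearMap :=
    LinearMap.ext fun x => rfl
  have hfac1 : ∀ f : H,
      LinearMap.mul' R A (TensorProduct.map j.toLinearMap (j.comp S).toLinearMap (Δ f))
        = C.val (Φ₁ f) := by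
    intro f
    rw [h1, h2, TensorProduct.map_comp, LinearMap.comp_apply, key]
    rfl
  have hfac2 : ∀ f : H,
      LinearMap.mul' R A (TensorProduct.map (j.comp S).toLinearMap j.toLinearMap (Δ f))
        = C.val (Φ₂ f) := by
    intro f
    rw [h1, h2, TensorProduct.map_comp, LinearMap.comp_apply, key]
    rfl
  have hjg0 : ∀ l, j (g 0 l) = a 0 l := fun l => hjg 0 l
  have hjg1 : ∀ l, j (g 1 l) = a 1 l := fun l => hjg 1 l
  have hdinvc' : ∀ (i : Fin 6) (jj : Fin 2) (x : A),
      a i jj * (dinv * x) = dinv * (a i jj * x) := by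
    intro i jj x; rw [← mul_assoc, ← hdinvc, mul_assoc]
  have c0 : ∀ jj l : Fin 2, a 0 jj * a 1 l = a 1 l * a 0 jj :=
    fun jj l => hcomm04 0 1 (by norm_num) (by norm_num) jj l
  have c1 : ∀ jj l : Fin 2, a 0 jj * a 0 l = a 0 l * a 0 jj :=
    fun jj l => hcomm04 0 0 (by norm_num) (by norm_num) jj l
  have c2 : ∀ jj l : Fin 2, a 1 jj * a 1 l = a 1 l * a 1 jj :=
    fun jj l => hcomm04 1 1 (by norm_num) (by norm_num) jj l
  -- Part 1: comodule map property
  have part1 : δ.comp j = (Algebra.TensorProduct.map j (AlgHom.id R H)).comp Δ := by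
    apply AlgHom.ext_of_adjoin_eq_top hgen
    rintro x (rfl | ⟨⟨i, l⟩, rfl⟩)
    · simp only [AlgHom.comp_apply, hjt, hδd, hΔt, Algebra.TensorProduct.map_tmul,
        AlgHom.id_apply]
    · simp only [AlgHom.comp_apply, hjg, hδ, hΔ, map_sum,
        Algebra.TensorProduct.map_tmul, AlgHom.id_apply]
  -- Part 2: generator computations for the convolution identities
  have hgen1 : ∀ x ∈ ({t} ∪ Set.range (fun ij : Fin 2 × Fin 2 => g ij.1 ij.2)),
      LinearMap.mul' R A (TensorProduct.map j.toLinearMap (j.comp S).toLinearMap (Δ x))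
        = algebraMap R A (ε x) := by
    rintro x (rfl | ⟨⟨i, l⟩, rfl⟩)
    · rw [hΔt, TensorProduct.map_tmul, LinearMap.mul'_apply]
      simp only [AlgHom.comp_apply, AlgHom.toLinearMap_apply, hjt, hSt, map_sub,
        map_mul, hjg0, hjg1, hεt, map_one]
      exact hdinv2
    · rw [hΔ, hε, map_sum, map_sum]
      simp only [TensorProduct.map_tmul, LinearMap.mul'_apply, AlgHom.comp_apply,
        AlgHom.toLinearMap_apply, Fin.sum_univ_two]
      fin_cases i <;> fin_cases l <;>
        simp only [Fin.zero_eta, Fin.mk_one, hS00, hS01, hS10, hS11, map_mul,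
          map_neg, hjt, hjg0, hjg1, reduceIte, map_one, map_zero, mul_neg, hdinvc']
      · rw [← mul_neg, ← mul_add, ← sub_eq_add_neg, hdinv2]
      · rw [c1 1 0, neg_add_cancel]; simp
      · rw [c2 0 1, add_neg_cancel]; simp
      · rw [← c0 1 0, ← c0 0 1, add_comm, ← mul_neg, ← mul_add, ← sub_eq_add_neg,
          hdinv2]
  have hgen2 : ∀ x ∈ ({t} ∪ Set.range (fun ij : Fin 2 × Fin 2 => g ij.1 ij.2)),
      LinearMap.mul' R A (TensorProduct.map (j.comp S).toLinearMap j.toLinearMap (Δ x))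
        = algebraMap R A (ε x) := by
    rintro x (rfl | ⟨⟨i, l⟩, rfl⟩)
    · rw [hΔt, TensorProduct.map_tmul, LinearMap.mul'_apply]
      simp only [AlgHom.comp_apply, AlgHom.toLinearMap_apply, hjt, hSt, map_sub,
        map_mul, hjg0, hjg1, hεt, map_one]
      exact hdinv1
    · rw [hΔ, hε, map_sum, map_sum]
      simp only [TensorProduct.map_tmul, LinearMap.mul'_apply, AlgHom.comp_apply,
        AlgHom.toLinearMap_apply, Fin.sum_univ_two]
      fin_cases i <;> fin_cases l <;>
        simp only [Fin.zero_eta, Fin.mk_one, hS00, hS01, hS10, hS11, map_mul,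
          map_neg, hjt, hjg0, hjg1, reduceIte, map_one, map_zero, neg_mul,
          mul_assoc]
      · rw [← c0 0 1, ← mul_neg, ← mul_add, ← sub_eq_add_neg, hdinv2]
      · rw [← c0 1 1, add_neg_cancel]; simp
      · rw [← c0 0 0, neg_add_cancel]; simp
      · rw [← c0 1 0, add_comm, ← mul_neg, ← mul_add, ← sub_eq_add_neg, hdinv2]
  have hE1 : C.val.comp Φ₁ = (Algebra.ofId R A).comp ε := by
    apply AlgHom.ext_of_adjoin_eq_top hgen
    intro x hx
    have := hgen1 x hx
    rw [hfac1 x] at this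
    simpa [Algebra.ofId_apply] using this
  have hE2 : C.val.comp Φ₂ = (Algebra.ofId R A).comp ε := by
    apply AlgHom.ext_of_adjoin_eq_top hgen
    intro x hx
    have := hgen2 x hx
    rw [hfac2 x] at this
    simpa [Algebra.ofId_apply] using this
  refine ⟨fun f => ?_, fun f => ?_, fun f => ?_⟩
  · exact AlgHom.congr_fun part1 f
  · rw [hfac1 f]
    have := AlgHom.congr_fun hE1 f
    simpa [Algebra.ofId_apply] using this
  · rw [hfac2 f]
    have := AlgHom.congr_fun hE2 f
    simpa [Algebra.ofId_apply] using this
end
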